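/- arXiv:1512.00890 — 3 statements merged into one kernel-verified Lean document; each statement's English description precedes it below -/
import Mathlib

section
/- Let a < b be real numbers, let N ≥ 2 be an even natural number, set x_k = a + k·(b−a)/N for k = 0, 1, …, N, and let f : ℝ → ℝ be four times continuously differentiable on [a,b] with |f⁗(x)| ≤ M for all x ∈ [a,b]. Then the composite Simpson approximation satisfies |∫_a^b f(x) dx − ∑_{ℓ=1}^{N/2} ((b−a)/(3N))·( f(x_{2ℓ−2}) + 4·f(x_{2ℓ−1}) + f(x_{2ℓ}) )| ≤ M·(b−a)^5 / (180·N^4). In particular the error of composite Simpson's rule is O(N^{−4}) for functions with bounded fourth derivative. -/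
open MeasureTheory Finset Set Topology

/-!
Write `E(t) = ∫_{c-t}^{c+t} f - (t/3)(f(c-t) + 4f(c) + f(c+t))` for the Simpson error on the panel
`[c - t, c + t]`. Then `E(0) = E'(0) = E''(0) = 0` and `E'''(t) = -(t/3)(f'''(c+t) - f'''(c-t))`,
so `|E'''(t)| ≤ (2/3) M t²` by the mean value theorem applied to `f'''`. Integrating three times
gives `|E(h)| ≤ M h⁵/90`, and the `N/2` panels of half-width `h = (b-a)/N` add up to
`M (b-a)⁵/(180 N⁴)`.
-/

noncomputable def simpsonRule (f : ℝ → ℝ) (c h : ℝ) : ℝ :=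
  h / 3 * (f (c - h) + 4 * f c + f (c + h))

theorem ContDiffOn.hasDerivAt_iteratedDerivWithin {𝕜 F : Type*} [NontriviallyNormedField 𝕜]
    [NormedAddCommGroup F] [NormedSpace 𝕜 F] {f : 𝕜 → F} {s : Set 𝕜} {n : WithTop ℕ∞}
    {i : ℕ} {y : 𝕜} (hf : ContDiffOn 𝕜 n f s) (hs : UniqueDiffOn 𝕜 s) (hi : i < n)
    (hy : s ∈ 𝓝 y) :
    HasDerivAt (iteratedDerivWithin i f s) (iteratedDerivWithin (i + 1) f s y) y := by
  rw [iteratedDerivWithin_succ]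
  exact ((hf.differentiableOn_iteratedDerivWithin hi hs) y
    (mem_of_mem_nhds hy)).hasDerivWithinAt.hasDerivAt hy

theorem abs_le_mul_pow_of_abs_deriv_le {g g' : ℝ → ℝ} {h K : ℝ} {n : ℕ}
    (hg : ContinuousOn g (Icc 0 h)) (hg0 : g 0 = 0)
    (hg' : ∀ t ∈ Ico 0 h, HasDerivAt g (g' t) t)
    (bound : ∀ t ∈ Ico 0 h, |g' t| ≤ (n + 1) * K * t ^ n) :
    ∀ t ∈ Icc 0 h, |g t| ≤ K * t ^ (n + 1) := by
  refine image_norm_le_of_norm_deriv_right_le_deriv_boundary hg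
    (fun t ht => (hg' t ht).hasDerivWithinAt) (by simp [hg0]) (fun t => ?_) bound
  refine ((hasDerivAt_pow (n + 1) t).const_mul K).congr_deriv ?_
  push_cast
  ring

/-- For `u 0 t = F (c + t) - F (c - t)` this is the Simpson estimate for `∫_{c-h}^{c+h} F'`. -/
theorem abs_simpson_remainder_le_of_hasDerivAt {u : ℕ → ℝ → ℝ} {h K : ℝ} (hh : 0 ≤ h)
    (hu : ∀ i < 4, ContinuousOn (u i) (Icc 0 h))
    (hu' : ∀ i < 4, ∀ t ∈ Ico 0 h, HasDerivAt (u i) (u (i + 1) t) t)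
    (hu₂ : u 2 0 = 0) (hK : ∀ t ∈ Ico 0 h, |u 4 t| ≤ K * t) :
    |u 0 h - u 0 0 - h / 3 * (u 1 h + 2 * u 1 0)| ≤ K / 180 * h ^ 5 := by
  have hu0 := hu 0 (by norm_num)
  have hu1 := hu 1 (by norm_num)
  have hu2 := hu 2 (by norm_num)
  have hu3 := hu 3 (by norm_num)
  have h₂ : ∀ t ∈ Icc 0 h, |u 2 t / 3 - t / 3 * u 3 t| ≤ K / 9 * t ^ 3 := by
    refine abs_le_mul_pow_of_abs_deriv_le (g' := fun t => -(t / 3 * u 4 t)) (by fun_prop)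
      (by simp [hu₂]) (fun t ht => ?_) (fun t ht => ?_)
    · exact ((hu' 2 (by norm_num) t ht).div_const 3).sub
        (((hasDerivAt_id t).div_const 3).mul (hu' 3 (by norm_num) t ht)) |>.congr_deriv
          (by simp only [id]; ring)
    · rw [abs_neg, abs_mul, abs_of_nonneg (by linarith [ht.1] : 0 ≤ t / 3)]
      calc t / 3 * |u 4 t| ≤ t / 3 * (K * t) :=
            mul_le_mul_of_nonneg_left (hK t ht) (by linarith [ht.1])
        _ = (2 + 1) * (K / 9) * t ^ 2 := by ring
  have h₁ : ∀ t ∈ Icc 0 h, |2 / 3 * (u 1 t - u 1 0) - t / 3 * u 2 t|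
      ≤ K / 36 * t ^ 4 := by
    refine abs_le_mul_pow_of_abs_deriv_le (by fun_prop) (by simp) (fun t ht => ?_)
      (fun t ht => (h₂ t (Ico_subset_Icc_self ht)).trans_eq (by push_cast; ring))
    exact (((hu' 1 (by norm_num) t ht).sub_const _).const_mul _).sub
        (((hasDerivAt_id t).div_const 3).mul (hu' 2 (by norm_num) t ht)) |>.congr_deriv
          (by simp only [id]; ring)
  have h₀ : ∀ t ∈ Icc 0 h, |u 0 t - u 0 0 - t / 3 * (u 1 t + 2 * u 1 0)|
      ≤ K / 180 * t ^ 5 := by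
    refine abs_le_mul_pow_of_abs_deriv_le (by fun_prop) (by simp) (fun t ht => ?_)
      (fun t ht => (h₁ t (Ico_subset_Icc_self ht)).trans_eq (by push_cast; ring))
    exact ((hu' 0 (by norm_num) t ht).sub_const _).sub
        (((hasDerivAt_id t).div_const 3).mul ((hu' 1 (by norm_num) t ht).add_const _))
      |>.congr_deriv (by simp only [id]; ring)
  exact h₀ h (right_mem_Icc.2 hh)

theorem abs_sub_sub_simpsonRule_le {D : ℕ → ℝ → ℝ} {c h M : ℝ} (hh : 0 ≤ h)
    (hD : ∀ i < 4, ContinuousOn (D i) (Icc (c - h) (c + h)))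
    (hD' : ∀ i < 5, ∀ y ∈ Ioo (c - h) (c + h), HasDerivAt (D i) (D (i + 1) y) y)
    (hM : ∀ y ∈ Ioo (c - h) (c + h), |D 5 y| ≤ M) :
    |D 0 (c + h) - D 0 (c - h) - simpsonRule (D 1) c h| ≤ M * h ^ 5 / 90 := by
  have hIcc : ∀ t ∈ Icc 0 h, c + t ∈ Icc (c - h) (c + h) ∧ c - t ∈ Icc (c - h) (c + h) :=
    fun t ⟨ht0, hth⟩ => ⟨⟨by linarith, by linarith⟩, ⟨by linarith, by linarith⟩⟩
  have hIcc_sub : ∀ t ∈ Ico 0 h, Icc (c - t) (c + t) ⊆ Ioo (c - h) (c + h) :=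
    fun t ⟨ht0, hth⟩ => Icc_subset_Ioo (by linarith) (by linarith)
  set u : ℕ → ℝ → ℝ := fun i t => D i (c + t) + (-1) ^ (i + 1) * D i (c - t) with hu
  have hu_cont : ∀ i < 4, ContinuousOn (u i) (Icc 0 h) := fun i hi =>
    ((hD i hi).comp (by fun_prop) (fun t ht => (hIcc t ht).1)).add
      (continuousOn_const.mul ((hD i hi).comp (by fun_prop) (fun t ht => (hIcc t ht).2)))
  have hu_deriv : ∀ i < 4, ∀ t ∈ Ico 0 h, HasDerivAt (u i) (u (i + 1) t) t := by
    intro i hi t ht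
    have hmem : c + t ∈ Ioo (c - h) (c + h) ∧ c - t ∈ Ioo (c - h) (c + h) :=
      ⟨hIcc_sub t ht (right_mem_Icc.2 (by linarith [ht.1])),
        hIcc_sub t ht (left_mem_Icc.2 (by linarith [ht.1]))⟩
    exact ((hD' i (by omega) _ hmem.1).comp_const_add c t).add
      (((hD' i (by omega) _ hmem.2).comp_const_sub c t).const_mul _) |>.congr_deriv
        (by simp only [hu]; ring)
  have hu_bound : ∀ t ∈ Ico 0 h, |u 4 t| ≤ 2 * M * t := by
    intro t ht
    have := norm_image_sub_le_of_norm_deriv_le_segment'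
      (fun y hy => (hD' 4 (by norm_num) y (hIcc_sub t ht hy)).hasDerivWithinAt)
      (fun y hy => hM y (hIcc_sub t ht (Ico_subset_Icc_self hy))) (c + t)
      (right_mem_Icc.2 (by linarith [ht.1]))
    rw [Real.norm_eq_abs] at this
    calc |u 4 t| = |D 4 (c + t) - D 4 (c - t)| := by simp only [hu]; congr 1; ring
      _ ≤ M * (c + t - (c - t)) := this
      _ = 2 * M * t := by ring
  calc |D 0 (c + h) - D 0 (c - h) - simpsonRule (D 1) c h|
      = |u 0 h - u 0 0 - h / 3 * (u 1 h + 2 * u 1 0)| := by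
        simp only [hu, simpsonRule, add_zero, sub_zero]
        congr 1
        ring
    _ ≤ 2 * M / 180 * h ^ 5 :=
        abs_simpson_remainder_le_of_hasDerivAt hh hu_cont hu_deriv
          (by simp only [hu, add_zero, sub_zero]; ring) hu_bound
    _ = M * h ^ 5 / 90 := by ring

theorem abs_integral_sub_simpsonRule_le {f : ℝ → ℝ} {a b c h M : ℝ} (hh : 0 < h)
    (hac : a ≤ c - h) (hcb : c + h ≤ b) (hf : ContDiffOn ℝ 4 f (Icc a b))
    (hM : ∀ y ∈ Icc a b, |iteratedDerivWithin 4 f (Icc a b) y| ≤ M) :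
    |(∫ y in (c - h)..(c + h), f y) - simpsonRule f c h| ≤ M * h ^ 5 / 90 := by
  have hs : UniqueDiffOn ℝ (Icc a b) := uniqueDiffOn_Icc (by linarith)
  have hsub : Icc (c - h) (c + h) ⊆ Icc a b := Icc_subset_Icc hac hcb
  have hnhds : ∀ y ∈ Ioo (c - h) (c + h), Icc a b ∈ 𝓝 y := fun y hy =>
    Icc_mem_nhds (by linarith [hy.1]) (by linarith [hy.2])
  have hfc : ContinuousOn f (Icc (c - h) (c + h)) := hf.continuousOn.mono hsub
  have hle : c - h ≤ c + h := by linarith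
  let D : ℕ → ℝ → ℝ
    | 0 => fun x => ∫ y in (c - h)..x, f y
    | i + 1 => iteratedDerivWithin i f (Icc a b)
  have hD : ∀ i < 4, ContinuousOn (D i) (Icc (c - h) (c + h))
    | 0, _ => by
      rw [← uIcc_of_le hle]
      exact intervalIntegral.continuousOn_primitive_interval'
        (hfc.intervalIntegrable_of_Icc hle) left_mem_uIcc
    | i + 1, hi => by
      have hi' : (i : WithTop ℕ∞) ≤ 4 := by norm_cast; omega
      exact (hf.continuousOn_iteratedDerivWithin hi' hs).mono hsub
  have hD' : ∀ i < 5, ∀ y ∈ Ioo (c - h) (c + h), HasDerivAt (D i) (D (i + 1) y) y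
    | 0, _, y, hy => by
      simp only [D, iteratedDerivWithin_zero]
      exact intervalIntegral.integral_hasDerivAt_right
        ((hfc.mono (Icc_subset_Icc_right hy.2.le)).intervalIntegrable_of_Icc hy.1.le)
        ((hfc.mono Ioo_subset_Icc_self).stronglyMeasurableAtFilter isOpen_Ioo y hy)
        (hf.continuousOn.continuousAt (hnhds y hy))
    | i + 1, hi, y, hy => by
      have hi' : (i : WithTop ℕ∞) < 4 := by norm_cast; omega
      exact hf.hasDerivAt_iteratedDerivWithin hs hi' (hnhds y hy)
  have := abs_sub_sub_simpsonRule_le hh.le hD hD' fun y hy => hM y (hsub (Ioo_subset_Icc_self hy))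
  simpa only [D, intervalIntegral.integral_same, sub_zero, iteratedDerivWithin_zero] using this

theorem abs_integral_sub_compositeSimpson_le {f : ℝ → ℝ} {x : ℕ → ℝ} {a b h M : ℝ}
    {n : ℕ} (hh : 0 < h) (hx : ∀ k, x k = a + k * h) (hb : x (2 * n) = b)
    (hf : ContDiffOn ℝ 4 f (Icc a b))
    (hM : ∀ y ∈ Icc a b, |iteratedDerivWithin 4 f (Icc a b) y| ≤ M) :
    |(∫ y in a..b, f y) -
        ∑ ℓ ∈ range n,
          h / 3 * (f (x (2 * ℓ)) + 4 * f (x (2 * ℓ + 1)) + f (x (2 * ℓ + 2)))|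
      ≤ n * (M * h ^ 5 / 90) := by
  have hb' : b = a + (2 * n : ℕ) * h := by rw [← hb, hx]
  have hmem : ∀ k ≤ 2 * n, x k ∈ Icc a b := fun k hk => by
    have hk' : (k : ℝ) ≤ (2 * n : ℕ) := by exact_mod_cast hk
    rw [hx, hb']
    constructor <;> nlinarith
  have hpanel : ∀ ℓ ∈ range n, |(∫ y in x (2 * ℓ)..x (2 * ℓ + 2), f y) -
      h / 3 * (f (x (2 * ℓ)) + 4 * f (x (2 * ℓ + 1)) + f (x (2 * ℓ + 2)))|
        ≤ M * h ^ 5 / 90 := by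
    intro ℓ hℓ
    have hℓ : ℓ < n := mem_range.1 hℓ
    have hleft : x (2 * ℓ + 1) - h = x (2 * ℓ) := by simp only [hx]; push_cast; ring
    have hright : x (2 * ℓ + 1) + h = x (2 * ℓ + 2) := by simp only [hx]; push_cast; ring
    have := abs_integral_sub_simpsonRule_le hh (hleft ▸ (hmem _ (by omega)).1)
      (hright ▸ (hmem _ (by omega)).2) hf hM
    rwa [simpsonRule, hleft, hright] at this
  have hint : ∀ k < n, IntervalIntegrable f volume (x (2 * k)) (x (2 * (k + 1))) :=
    fun k hk => (hf.continuousOn.mono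
      (uIcc_subset_Icc (hmem _ (by omega)) (hmem _ (by omega)))).intervalIntegrable
  have hsplit := intervalIntegral.sum_integral_adjacent_intervals hint
  rw [show x (2 * 0) = a by simp [hx], hb] at hsplit
  rw [← hsplit, ← sum_sub_distrib]
  calc _ ≤ _ := abs_sum_le_sum_abs _ _
    _ ≤ ∑ _ℓ ∈ range n, M * h ^ 5 / 90 := sum_le_sum hpanel
    _ = n * (M * h ^ 5 / 90) := by simp

/-- Error bound for the composite Simpson rule with an even number `N` of subintervals:
if `f` is four times continuously differentiable on `[a,b]` with fourth derivative bounded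
by `M` there, then the composite Simpson approximation has error at most
`M (b-a)^5 / (180 N^4)`; in particular the error is `O(N^{-4})`. -/
theorem composite_simpson_error_bound
    (a b : ℝ) (hab : a < b) (N : ℕ) (hN2 : 2 ≤ N) (hNeven : Even N)
    (x : ℕ → ℝ) (hx : ∀ k, x k = a + k * (b - a) / N)
    (f : ℝ → ℝ) (M : ℝ)
    (hf : ContDiffOn ℝ 4 f (Set.Icc a b))
    (hM : ∀ y ∈ Set.Icc a b, |iteratedDerivWithin 4 f (Set.Icc a b) y| ≤ M) :
    |(∫ y in a..b, f y) -
        ∑ ℓ ∈ Finset.range (N / 2),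
          ((b - a) / (3 * N)) * (f (x (2 * ℓ)) + 4 * f (x (2 * ℓ + 1)) + f (x (2 * ℓ + 2)))|
      ≤ M * (b - a) ^ 5 / (180 * N ^ 4) := by
  obtain ⟨n, rfl⟩ := hNeven
  have hn : (0 : ℝ) < n := by exact_mod_cast (by omega : 0 < n)
  have hN : ((n + n : ℕ) : ℝ) = 2 * n := by push_cast; ring
  have hx' : ∀ k, x k = a + k * ((b - a) / (n + n : ℕ)) := fun k => by rw [hx]; ring
  have hbound := abs_integral_sub_compositeSimpson_le (n := n)
    (div_pos (sub_pos.2 hab) (by positivity)) hx' (by rw [hx']; push_cast; field_simp; ring) hf hM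
  rw [show (n + n) / 2 = n by omega,
    show (b - a) / (3 * (n + n : ℕ)) = (b - a) / (n + n : ℕ) / 3 by ring]
  refine hbound.trans_eq ?_
  rw [hN]
  field_simp
  ring
end

section
/- Let T be a full rooted binary tree (every internal node has exactly two children), with root density f_r : ℝ → ℝ nonnegative and measurable, with each non-root node i carrying a nonnegative measurable transition kernel f_i : ℝ × ℝ → ℝ (jointly measurable, with f_i(x̃, x) the density of the value x̃ at node i given value x at its parent), and with each leaf i carrying a nonnegative measurable observation function π_i : ℝ → ℝ. Define the partial likelihood 𝓕_i : ℝ → ℝ≥0∞ recursively: if node i is a leaf, 𝓕_i(x) = ∫ f_i(x̃, x)·π_i(x̃) dx̃; if node i is internal with children u and v, 𝓕_i(x) = ∫ f_i(x̃, x)·𝓕_u(x̃)·𝓕_v(x̃) dx̃ (Lebesgue integrals over ℝ of nonnegative functions). Then, when the root has children u and v, the quantity ∫ f_r(x)·𝓕_u(x)·𝓕_v(x) dx equals the iterated integral over all node variables (x_i for every node i of T) of the product f_r(x_root) · ∏_{non-root nodes i} f_i(x_i, x_{parent(i)}) · ∏_{leaves i} π_i(x_i). That is, the pruning recursion computes exactly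 the multidimensional marginalized likelihood integral. -/
open MeasureTheory
open scoped ENNReal

/-- A (subtree of a) full rooted binary tree hanging below an edge of the phylogeny.
Each node carries the transition kernel `k : ℝ → ℝ → ℝ` of the branch above it, where
`k xt x` is the density of the value `xt` at the node given value `x` at its parent;
each leaf additionally carries an observation function `obs : ℝ → ℝ`. -/
inductive PhyloTree where
  | leaf (k : ℝ → ℝ → ℝ) (obs : ℝ → ℝ) : PhyloTree
  | node (k : ℝ → ℝ → ℝ) (l r : PhyloTree) : PhyloTree

/-- All the data carried by the tree is measurable and nonnegative. -/
def PhyloTree.Valid : PhyloTree → Prop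
  | .leaf k obs => Measurable (Function.uncurry k) ∧ (∀ xt x, 0 ≤ k xt x) ∧
      Measurable obs ∧ (∀ xt, 0 ≤ obs xt)
  | .node k l r => Measurable (Function.uncurry k) ∧ (∀ xt x, 0 ≤ k xt x) ∧
      l.Valid ∧ r.Valid

/-- The partial likelihood `𝓕_i(x)` of a subtree, given value `x` at the parent of its top
node, defined by the pruning recursion: at a leaf, `𝓕(x) = ∫ k(xt, x)·π(xt) dxt`, and at an
internal node with children `u, v`, `𝓕(x) = ∫ k(xt, x)·𝓕_u(xt)·𝓕_v(xt) dxt`. -/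
noncomputable def PhyloTree.partialLik : PhyloTree → ℝ → ℝ≥0∞
  | .leaf k obs => fun x => ∫⁻ xt, ENNReal.ofReal (k xt x) * ENNReal.ofReal (obs xt)
  | .node k l r => fun x => ∫⁻ xt, ENNReal.ofReal (k xt x) * l.partialLik xt * r.partialLik xt

/-- The space of assignments of a real value to every node of the subtree. -/
def PhyloTree.Vars : PhyloTree → Type
  | .leaf _ _ => ℝ
  | .node _ l r => ℝ × l.Vars × r.Vars

/-- The natural measurable-space structure on assignments. -/
def PhyloTree.varsMeasurableSpace : (t : PhyloTree) → MeasurableSpace t.Vars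
  | .leaf _ _ => (inferInstance : MeasurableSpace ℝ)
  | .node _ l r =>
      @Prod.instMeasurableSpace _ _ (inferInstance : MeasurableSpace ℝ)
        (@Prod.instMeasurableSpace _ _ l.varsMeasurableSpace r.varsMeasurableSpace)

attribute [instance] PhyloTree.varsMeasurableSpace

/-- Lebesgue measure on the space of assignments: one copy of Lebesgue measure on ℝ for
each node of the subtree. -/
noncomputable def PhyloTree.varsMeasure : (t : PhyloTree) → Measure t.Vars
  | .leaf _ _ => (volume : Measure ℝ)
  | .node _ l r => (volume : Measure ℝ).prod (l.varsMeasure.prod r.varsMeasure)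

/-- The joint density of an assignment of values to all nodes of the subtree, given value
`x` at the parent of its top node: the product of all transition kernels along the branches
of the subtree and the observation functions at its leaves. -/
noncomputable def PhyloTree.density : (t : PhyloTree) → t.Vars → ℝ → ℝ≥0∞
  | .leaf k obs => fun xt x => ENNReal.ofReal (k xt x) * ENNReal.ofReal (obs xt)
  | .node k l r => fun y x =>
      ENNReal.ofReal (k y.1 x) * l.density y.2.1 y.1 * r.density y.2.2 y.1

/-!
Unfolding the pruning recursion one node at a time, Tonelli's theorem splits the integral of
the joint density of a subtree over the product of the value spaces of its two child subtrees
into the product of their two integrals. By induction on the tree, the partial likelihood of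
every subtree is therefore the integral of its joint density over all its node values, and the
theorem is this identity for the two subtrees below the root.
-/

namespace PhyloTree

instance sigmaFinite_varsMeasure : (t : PhyloTree) → SigmaFinite t.varsMeasure
  | .leaf _ _ => inferInstanceAs (SigmaFinite (volume : Measure ℝ))
  | .node _ l r =>
      have := l.sigmaFinite_varsMeasure
      have := r.sigmaFinite_varsMeasure
      inferInstanceAs (SigmaFinite ((volume : Measure ℝ).prod (l.varsMeasure.prod r.varsMeasure)))

theorem measurable_density_uncurry :
    ∀ t : PhyloTree, t.Valid → Measurable (fun p : t.Vars × ℝ => t.density p.1 p.2)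
  | .leaf k obs, ⟨hk, _, hobs, _⟩ =>
    hk.ennreal_ofReal.mul (hobs.comp measurable_fst).ennreal_ofReal
  | .node k l r, ⟨hk, _, hl, hr⟩ => by
    have hkernel : Measurable fun p : (ℝ × l.Vars × r.Vars) × ℝ => ENNReal.ofReal (k p.1.1 p.2) :=
      (hk.comp (measurable_fst.fst.prodMk measurable_snd)).ennreal_ofReal
    have hleft : Measurable fun p : (ℝ × l.Vars × r.Vars) × ℝ => l.density p.1.2.1 p.1.1 :=
      (l.measurable_density_uncurry hl).comp (measurable_fst.snd.fst.prodMk measurable_fst.fst)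
    have hright : Measurable fun p : (ℝ × l.Vars × r.Vars) × ℝ => r.density p.1.2.2 p.1.1 :=
      (r.measurable_density_uncurry hr).comp (measurable_fst.snd.snd.prodMk measurable_fst.fst)
    exact (hkernel.mul hleft).mul hright

theorem measurable_density {t : PhyloTree} (ht : t.Valid) (x : ℝ) :
    Measurable fun y : t.Vars => t.density y x :=
  (t.measurable_density_uncurry ht).comp (measurable_id.prodMk measurable_const)

theorem partialLik_eq_lintegral_density :
    ∀ t : PhyloTree, t.Valid → ∀ x, t.partialLik x = ∫⁻ y, t.density y x ∂t.varsMeasure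
  | .leaf _ _, _, _ => rfl
  | .node k l r, ht@⟨_, _, hl, hr⟩, x => by
    show (∫⁻ xt, ENNReal.ofReal (k xt x) * l.partialLik xt * r.partialLik xt)
        = ∫⁻ y, ENNReal.ofReal (k y.1 x) * l.density y.2.1 y.1 * r.density y.2.2 y.1
            ∂(volume : Measure ℝ).prod (l.varsMeasure.prod r.varsMeasure)
    rw [lintegral_prod _ (by exact (measurable_density ht x).aemeasurable)]
    refine lintegral_congr fun xt => ?_
    dsimp only
    rw [lintegral_prod_mul
        ((measurable_density hl xt).const_mul _).aemeasurable
        (measurable_density hr xt).aemeasurable,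
      lintegral_const_mul _ (measurable_density hl xt),
      l.partialLik_eq_lintegral_density hl, r.partialLik_eq_lintegral_density hr, mul_assoc]

end PhyloTree

theorem pruning_computes_marginal_likelihood_general
    (fr : ℝ → ℝ)
    (u v : PhyloTree) (hu : u.Valid) (hv : v.Valid) :
    (∫⁻ x, ENNReal.ofReal (fr x) * u.partialLik x * v.partialLik x)
      = ∫⁻ x, ∫⁻ yu, ∫⁻ yv,
          ENNReal.ofReal (fr x) * u.density yu x * v.density yv x
            ∂v.varsMeasure ∂u.varsMeasure ∂(volume : Measure ℝ) := by
  refine lintegral_congr fun x => ?_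
  rw [lintegral_lintegral_mul
      ((PhyloTree.measurable_density hu x).const_mul _).aemeasurable
      (PhyloTree.measurable_density hv x).aemeasurable,
    lintegral_const_mul _ (PhyloTree.measurable_density hu x),
    u.partialLik_eq_lintegral_density hu, v.partialLik_eq_lintegral_density hv]

/-- Felsenstein-style pruning computes exactly the marginalized likelihood: for a root with
density `f_r` and child subtrees `u` and `v` (all data nonnegative and measurable), the
single integral `∫ f_r(x)·𝓕_u(x)·𝓕_v(x) dx` of the pruning recursion equals the iterated
integral, over the values at all nodes of the tree, of the product of the root density, all
transition kernels, and all leaf observation functions. -/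
theorem pruning_computes_marginal_likelihood
    (fr : ℝ → ℝ) (hfr : Measurable fr) (hfr0 : ∀ x, 0 ≤ fr x)
    (u v : PhyloTree) (hu : u.Valid) (hv : v.Valid) :
    (∫⁻ x, ENNReal.ofReal (fr x) * u.partialLik x * v.partialLik x)
      = ∫⁻ x, ∫⁻ yu, ∫⁻ yv,
          ENNReal.ofReal (fr x) * u.density yu x * v.density yv x
            ∂v.varsMeasure ∂u.varsMeasure ∂(volume : Measure ℝ) :=
  pruning_computes_marginal_likelihood_general fr u v hu hv
end

section
/- Let a < b, let N be a positive natural number, let X_0, …, X_N ∈ [a,b] be quadrature points, and let w_0, …, w_N ≥ 0 be quadrature weights. Let K : ℝ → ℝ be a nonnegative measurable kernel with ((b−a)/N)·∑_{ℓ=0}^{N} w_ℓ·K(X_ℓ) ≤ C. Let 𝓕_u, 𝓕_v : ℝ → ℝ satisfy 0 ≤ 𝓕_u(x̃) ≤ 1 and 0 ≤ 𝓕_v(x̃) ≤ 1 for all x̃ ∈ [a,b], and let F_u, F_v : {0,…,N} → ℝ satisfy 0 ≤ F_u[ℓ] ≤ 1, 0 ≤ F_v[ℓ] ≤ 1, |F_u[ℓ]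 − 𝓕_u(X_ℓ)| ≤ ε_u and |F_v[ℓ] − 𝓕_v(X_ℓ)| ≤ ε_v for all ℓ. Suppose moreover that the quadrature rule applied to the exact integrand has error at most δ, i.e. |((b−a)/N)·∑_{ℓ=0}^{N} w_ℓ·K(X_ℓ)·𝓕_u(X_ℓ)·𝓕_v(X_ℓ) − ∫_a^b K(x̃)·𝓕_u(x̃)·𝓕_v(x̃) dx̃| ≤ δ. Then |((b−a)/N)·∑_{ℓ=0}^{N} w_ℓ·K(X_ℓ)·F_u[ℓ]·F_v[ℓ] − ∫_a^b K(x̃)·𝓕_u(x̃)·𝓕_v(x̃) dx̃| ≤ C·(ε_u + ε_v) + δ. (This is the error-propagation step in the induction proving that the dynamic-programming quadrature algorithm on a phylogeny accumulates only additive errors across nodes.) -/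
open MeasureTheory Finset

/-! Split the error at the quadrature sum of the exact integrand, which is off by at most `δ`.
A product of two factors of norm at most one moves by at most the sum of the perturbations of
the factors, so each quadrature term moves by at most `w ℓ * K (X ℓ) * (εu + εv)`, and the total
weight bound turns this into `C * (εu + εv)`. -/

theorem norm_mul_sub_mul_le_of_norm_le_one {R : Type*} [NonUnitalSeminormedRing R]
    {p q r s : R} (hq : ‖q‖ ≤ 1) (hr : ‖r‖ ≤ 1) :
    ‖p * q - r * s‖ ≤ ‖p - r‖ + ‖q - s‖ :=
  calc ‖p * q - r * s‖ = ‖(p - r) * q + r * (q - s)‖ := by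
        rw [sub_mul, mul_sub, sub_add_sub_cancel]
    _ ≤ ‖p - r‖ * ‖q‖ + ‖r‖ * ‖q - s‖ :=
        (norm_add_le _ _).trans (add_le_add (norm_mul_le _ _) (norm_mul_le _ _))
    _ ≤ ‖p - r‖ + ‖q - s‖ :=
        add_le_add (mul_le_of_le_one_right (norm_nonneg _) hq)
          (mul_le_of_le_one_left (norm_nonneg _) hr)

theorem abs_sum_mul_sub_sum_mul_le {ι : Type*} (s : Finset ι) {c f g : ι → ℝ} {ε : ℝ}
    (hc : ∀ i ∈ s, 0 ≤ c i) (hfg : ∀ i ∈ s, |f i - g i| ≤ ε) :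
    |∑ i ∈ s, c i * f i - ∑ i ∈ s, c i * g i| ≤ (∑ i ∈ s, c i) * ε := by
  rw [← sum_sub_distrib, sum_mul]
  refine (abs_sum_le_sum_abs _ _).trans (sum_le_sum fun i hi => ?_)
  rw [← mul_sub, abs_mul, abs_of_nonneg (hc i hi)]
  exact mul_le_mul_of_nonneg_left (hfg i hi) (hc i hi)

theorem quadrature_error_propagation_general
    (a b : ℝ) (hab : a < b) (N : ℕ)
    (X : Fin (N + 1) → ℝ) (hX : ∀ ℓ, X ℓ ∈ Set.Icc a b)
    (w : Fin (N + 1) → ℝ) (hw : ∀ ℓ, 0 ≤ w ℓ)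
    (K : ℝ → ℝ) (hK0 : ∀ x, 0 ≤ K x)
    (C : ℝ) (hC : ((b - a) / N) * ∑ ℓ, w ℓ * K (X ℓ) ≤ C)
    (Fu Fv : ℝ → ℝ)
    (hFu0 : ∀ x ∈ Set.Icc a b, 0 ≤ Fu x) (hFu1 : ∀ x ∈ Set.Icc a b, Fu x ≤ 1)
    (Au Av : Fin (N + 1) → ℝ)
    (hAv0 : ∀ ℓ, 0 ≤ Av ℓ) (hAv1 : ∀ ℓ, Av ℓ ≤ 1)
    (εu εv : ℝ)
    (hεu : ∀ ℓ, |Au ℓ - Fu (X ℓ)| ≤ εu) (hεv : ∀ ℓ, |Av ℓ - Fv (X ℓ)| ≤ εv)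
    (δ : ℝ)
    (hδ : |((b - a) / N) * (∑ ℓ, w ℓ * K (X ℓ) * Fu (X ℓ) * Fv (X ℓ))
            - ∫ x in Set.Icc a b, K x * Fu x * Fv x| ≤ δ) :
    |((b - a) / N) * (∑ ℓ, w ℓ * K (X ℓ) * Au ℓ * Av ℓ)
        - ∫ x in Set.Icc a b, K x * Fu x * Fv x|
      ≤ C * (εu + εv) + δ := by
  have hstep : (0 : ℝ) ≤ (b - a) / N := div_nonneg (sub_nonneg.2 hab.le) N.cast_nonneg
  have hprod : ∀ ℓ, |Au ℓ * Av ℓ - Fu (X ℓ) * Fv (X ℓ)| ≤ εu + εv := fun ℓ => by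
    have hAv : |Av ℓ| ≤ 1 := abs_le.2 ⟨by linarith [hAv0 ℓ], hAv1 ℓ⟩
    have hFu : |Fu (X ℓ)| ≤ 1 := abs_le.2 ⟨by linarith [hFu0 _ (hX ℓ)], hFu1 _ (hX ℓ)⟩
    have := norm_mul_sub_mul_le_of_norm_le_one (p := Au ℓ) (s := Fv (X ℓ)) hAv hFu
    simp only [Real.norm_eq_abs] at this
    linarith [hεu ℓ, hεv ℓ]
  have hε : 0 ≤ εu + εv := (abs_nonneg _).trans (hprod 0)
  have hsum := abs_sum_mul_sub_sum_mul_le univ (fun ℓ _ => mul_nonneg (hw ℓ) (hK0 (X ℓ)))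
    fun ℓ _ => hprod ℓ
  simp only [← mul_assoc] at hsum
  have hperturb : |((b - a) / N) * (∑ ℓ, w ℓ * K (X ℓ) * Au ℓ * Av ℓ)
      - ((b - a) / N) * (∑ ℓ, w ℓ * K (X ℓ) * Fu (X ℓ) * Fv (X ℓ))| ≤ C * (εu + εv) := by
    rw [← mul_sub, abs_mul, abs_of_nonneg hstep]
    calc _ ≤ (b - a) / N * ((∑ ℓ, w ℓ * K (X ℓ)) * (εu + εv)) := by gcongr
      _ ≤ C * (εu + εv) := by rw [← mul_assoc]; gcongr
  exact (abs_sub_le _ _ _).trans (add_le_add hperturb hδ)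

/-- Error propagation step for the dynamic-programming quadrature algorithm: if a
quadrature rule with nonnegative weights applied to the kernel has total weight at most
`C`, the exact partial likelihoods `𝓕_u, 𝓕_v` take values in `[0,1]` on `[a,b]`, the stored
arrays `F_u, F_v` take values in `[0,1]` and approximate `𝓕_u, 𝓕_v` at the quadrature
points with errors `ε_u, ε_v`, and the quadrature rule applied to the exact integrand has
error at most `δ`, then the quadrature sum computed from the stored arrays approximates the
exact integral with error at most `C·(ε_u + ε_v) + δ`. -/
theorem quadrature_error_propagation
    (a b : ℝ) (hab : a < b) (N : ℕ) (hN : 0 < N)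
    (X : Fin (N + 1) → ℝ) (hX : ∀ ℓ, X ℓ ∈ Set.Icc a b)
    (w : Fin (N + 1) → ℝ) (hw : ∀ ℓ, 0 ≤ w ℓ)
    (K : ℝ → ℝ) (hKmeas : Measurable K) (hK0 : ∀ x, 0 ≤ K x)
    (C : ℝ) (hC : ((b - a) / N) * ∑ ℓ, w ℓ * K (X ℓ) ≤ C)
    (Fu Fv : ℝ → ℝ)
    (hFu0 : ∀ x ∈ Set.Icc a b, 0 ≤ Fu x) (hFu1 : ∀ x ∈ Set.Icc a b, Fu x ≤ 1)
    (hFv0 : ∀ x ∈ Set.Icc a b, 0 ≤ Fv x) (hFv1 : ∀ x ∈ Set.Icc a b, Fv x ≤ 1)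
    (Au Av : Fin (N + 1) → ℝ)
    (hAu0 : ∀ ℓ, 0 ≤ Au ℓ) (hAu1 : ∀ ℓ, Au ℓ ≤ 1)
    (hAv0 : ∀ ℓ, 0 ≤ Av ℓ) (hAv1 : ∀ ℓ, Av ℓ ≤ 1)
    (εu εv : ℝ)
    (hεu : ∀ ℓ, |Au ℓ - Fu (X ℓ)| ≤ εu) (hεv : ∀ ℓ, |Av ℓ - Fv (X ℓ)| ≤ εv)
    (δ : ℝ)
    (hδ : |((b - a) / N) * (∑ ℓ, w ℓ * K (X ℓ) * Fu (X ℓ) * Fv (X ℓ))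
            - ∫ x in Set.Icc a b, K x * Fu x * Fv x| ≤ δ) :
    |((b - a) / N) * (∑ ℓ, w ℓ * K (X ℓ) * Au ℓ * Av ℓ)
        - ∫ x in Set.Icc a b, K x * Fu x * Fv x|
      ≤ C * (εu + εv) + δ :=
  quadrature_error_propagation_general a b hab N X hX w hw K hK0 C hC Fu Fv hFu0 hFu1 Au Av hAv0
    hAv1 εu εv hεu hεv δ hδ
end
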